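/- arXiv:1104.1937 — 2 statements merged into one kernel-verified Lean document; each statement's English description precedes it below -/
import Mathlib

section
/- Let k be a perfect field of characteristic p > 0, S = k[x_1,…,x_n], e ≥ 1, q = p^e, and J ⊆ S an ideal. Then there exists a smallest ideal A ⊆ S with the property J ⊆ A^{[q]}; that is, there is an ideal A with J ⊆ A^{[q]} such that A ⊆ B for every ideal B ⊆ S with J ⊆ B^{[q]}. -/
/-!
Over a perfect field, `S = k[x₁, …, xₙ]` is free over its subring `S^q` of `q`-th powers with
basis the monomials `x^c`, `0 ≤ cᵢ < q`: every `f` is `∑_c x^c f_c^q`, where `f_c` takes `q`-th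
roots of the coefficients of `f` at the exponents `q • m + c`. The map `f ↦ f_c` is additive
and satisfies `(b^q h)_c = b h_c`, so `f ∈ B^{[q]}` forces `f_c ∈ B` for all `c`. Hence the
components of the elements of `J` lie in every `B` with `J ⊆ B^{[q]}`, hence in the intersection
`A` of all such `B`, and the decomposition gives `J ⊆ A^{[q]}`.
-/

/-- The `q`-th Frobenius power `I^{[q]}` of an ideal: the ideal generated by
the `q`-th powers of the elements of `I`. -/
def frobPow {S : Type*} [CommRing S] (q : ℕ) (A : Ideal S) : Ideal S :=
  Ideal.span ((fun f => f ^ q) '' (A : Set S))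

open MvPolynomial

/-- The Frobenius root `J^{[1/q]}`. -/
def frobRoot {S : Type*} [CommRing S] (q : ℕ) (J : Ideal S) : Ideal S :=
  sInf {B | J ≤ frobPow q B}

theorem frobRoot_le {S : Type*} [CommRing S] {q : ℕ} {J B : Ideal S} (h : J ≤ frobPow q B) :
    frobRoot q J ≤ B :=
  sInf_le h

namespace Finsupp

variable {σ : Type*} (q : ℕ)

noncomputable def modNat (μ : σ →₀ ℕ) : σ →₀ ℕ := μ.mapRange (· % q) (Nat.zero_mod q)

noncomputable def divNat (μ : σ →₀ ℕ) : σ →₀ ℕ := μ.mapRange (· / q) (Nat.zero_div q)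

theorem smul_divNat_add_modNat (μ : σ →₀ ℕ) : q • divNat q μ + modNat q μ = μ := by
  ext i
  simp [divNat, modNat, Nat.div_add_mod]

variable {q}

theorem modNat_lt (hq : q ≠ 0) (μ : σ →₀ ℕ) (i : σ) : modNat q μ i < q :=
  Nat.mod_lt _ (Nat.pos_of_ne_zero hq)

theorem smul_add_injective (hq : q ≠ 0) (c : σ →₀ ℕ) :
    Function.Injective (fun w : σ →₀ ℕ => q • w + c) :=
  (add_left_injective c).comp (smul_right_injective _ hq)

theorem smul_add_eq_smul_add_iff {c c' w w' : σ →₀ ℕ} (hc : ∀ i, c i < q)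
    (hc' : ∀ i, c' i < q) : q • w + c = q • w' + c' ↔ w = w' ∧ c = c' := by
  refine ⟨fun h => ?_, fun ⟨hw, hc⟩ => hw ▸ hc ▸ rfl⟩
  have hi (i : σ) : q * w i + c i = q * w' i + c' i := by simpa using DFunLike.congr_fun h i
  have hcc' : c = c' := by
    ext i
    simpa [Nat.mul_add_mod, Nat.mod_eq_of_lt (hc i), Nat.mod_eq_of_lt (hc' i)]
      using congrArg (· % q) (hi i)
  subst hcc'
  refine ⟨?_, rfl⟩
  ext i
  exact Nat.eq_of_mul_eq_mul_left (Nat.zero_lt_of_lt (hc i)) (Nat.add_right_cancel (hi i))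

end Finsupp

section

variable {k : Type*} [CommSemiring k] (p : ℕ) [ExpChar k p] [PerfectRing k p] (e : ℕ)

theorem iterateFrobeniusEquiv_symm_pow (x : k) :
    (iterateFrobeniusEquiv k p e).symm (x ^ p ^ e) = x :=
  (iterateFrobeniusEquiv k p e).symm_apply_apply x

theorem iterateFrobeniusEquiv_symm_pow_p_pow (x : k) :
    (iterateFrobeniusEquiv k p e).symm x ^ p ^ e = x :=
  (iterateFrobeniusEquiv k p e).apply_symm_apply x

end

namespace MvPolynomial

open Finsupp

section

variable {σ k : Type*} [CommSemiring k] (p : ℕ) [ExpChar k p] [PerfectRing k p] (e : ℕ)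

/-- For `c` with all `c i < p ^ e` these are the coordinates of `f` over the subring of
`p ^ e`-th powers: `f = ∑ c, X ^ c * frobeniusComponent p e c f ^ p ^ e`. -/
noncomputable def frobeniusComponent (c : σ →₀ ℕ) (f : MvPolynomial σ k) : MvPolynomial σ k :=
  map ((iterateFrobeniusEquiv k p e).symm : k →+* k) <| .ofCoeff <|
    (AddMonoidAlgebra.coeff f).comapDomain (p ^ e • · + c)
      (smul_add_injective (pow_ne_zero e (expChar_ne_zero k p)) c).injOn

variable {p e}

theorem coeff_frobeniusComponent (c m : σ →₀ ℕ) (f : MvPolynomial σ k) :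
    coeff m (frobeniusComponent p e c f) =
      (iterateFrobeniusEquiv k p e).symm (coeff (p ^ e • m + c) f) := by
  rw [frobeniusComponent, coeff_map]
  rfl

theorem frobeniusComponent_add (c : σ →₀ ℕ) (f g : MvPolynomial σ k) :
    frobeniusComponent p e c (f + g) = frobeniusComponent p e c f + frobeniusComponent p e c g := by
  ext m
  simp only [coeff_frobeniusComponent, coeff_add, map_add]

theorem frobeniusComponent_sum {ι : Type*} (c : σ →₀ ℕ) (s : Finset ι) (f : ι → MvPolynomial σ k) :
    frobeniusComponent p e c (∑ i ∈ s, f i) = ∑ i ∈ s, frobeniusComponent p e c (f i) := by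
  ext m
  simp only [coeff_frobeniusComponent, coeff_sum, map_sum]

theorem frobeniusComponent_monomial [DecidableEq σ] {c c' : σ →₀ ℕ} (hc : ∀ i, c i < p ^ e)
    (hc' : ∀ i, c' i < p ^ e) (w : σ →₀ ℕ) (a : k) :
    frobeniusComponent p e c (monomial (p ^ e • w + c') a) =
      if c' = c then monomial w ((iterateFrobeniusEquiv k p e).symm a) else 0 := by
  ext m
  simp only [coeff_frobeniusComponent, coeff_monomial, smul_add_eq_smul_add_iff hc' hc]
  split_ifs <;> simp_all

theorem frobeniusComponent_pow_mul {c : σ →₀ ℕ} (hc : ∀ i, c i < p ^ e) (b h : MvPolynomial σ k) :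
    frobeniusComponent p e c (b ^ p ^ e * h) = b * frobeniusComponent p e c h := by
  classical
  have hq : p ^ e ≠ 0 := pow_ne_zero e (expChar_ne_zero k p)
  induction b using induction_on' with
  | monomial u β =>
    induction h using induction_on' with
    | monomial ν a =>
      rw [← smul_divNat_add_modNat (p ^ e) ν, monomial_pow, monomial_mul, ← add_assoc, ← smul_add,
        frobeniusComponent_monomial hc (modNat_lt hq ν),
        frobeniusComponent_monomial hc (modNat_lt hq ν)]
      split_ifs
      · rw [monomial_mul, map_mul, iterateFrobeniusEquiv_symm_pow]
      · rw [mul_zero]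
    | add h₁ h₂ ih₁ ih₂ =>
      rw [mul_add, frobeniusComponent_add, frobeniusComponent_add, ih₁, ih₂, mul_add]
  | add b₁ b₂ ih₁ ih₂ =>
    rw [add_pow_expChar_pow, add_mul, frobeniusComponent_add, ih₁, ih₂, add_mul]

theorem sum_monomial_mul_frobeniusComponent_monomial_pow {C : Finset (σ →₀ ℕ)}
    (hC : ∀ c ∈ C, ∀ i, c i < p ^ e) {ν : σ →₀ ℕ} (hν : modNat (p ^ e) ν ∈ C) (a : k) :
    ∑ c ∈ C, monomial c 1 * frobeniusComponent p e c (monomial ν a) ^ p ^ e = monomial ν a := by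
  classical
  have hq : p ^ e ≠ 0 := pow_ne_zero e (expChar_ne_zero k p)
  calc ∑ c ∈ C, monomial c 1 * frobeniusComponent p e c (monomial ν a) ^ p ^ e
      = ∑ c ∈ C, if modNat (p ^ e) ν = c
          then monomial (modNat (p ^ e) ν) 1 * monomial (p ^ e • divNat (p ^ e) ν) a else 0 := by
        refine Finset.sum_congr rfl fun c hc => ?_
        conv_lhs => rw [← smul_divNat_add_modNat (p ^ e) ν]
        rw [frobeniusComponent_monomial (hC c hc) (modNat_lt hq ν)]
        split_ifs with h
        · rw [h, monomial_pow, iterateFrobeniusEquiv_symm_pow_p_pow]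
        · rw [zero_pow hq, mul_zero]
    _ = monomial ν a := by
        rw [Finset.sum_ite_eq, if_pos hν, monomial_mul, one_mul, add_comm, smul_divNat_add_modNat]

theorem sum_monomial_mul_frobeniusComponent_pow {C : Finset (σ →₀ ℕ)}
    (hC : ∀ c ∈ C, ∀ i, c i < p ^ e) (f : MvPolynomial σ k)
    (hf : ∀ ν ∈ f.support, modNat (p ^ e) ν ∈ C) :
    ∑ c ∈ C, monomial c 1 * frobeniusComponent p e c f ^ p ^ e = f := by
  calc ∑ c ∈ C, monomial c 1 * frobeniusComponent p e c f ^ p ^ e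
      = ∑ c ∈ C, ∑ ν ∈ f.support,
          monomial c 1 * frobeniusComponent p e c (monomial ν (coeff ν f)) ^ p ^ e := by
        conv_lhs => rw [as_sum f]
        simp only [frobeniusComponent_sum, ← iterateFrobenius_def, map_sum, Finset.mul_sum]
    _ = ∑ ν ∈ f.support, monomial ν (coeff ν f) := by
        rw [Finset.sum_comm]
        exact Finset.sum_congr rfl fun ν hν =>
          sum_monomial_mul_frobeniusComponent_monomial_pow hC (hf ν hν) _
    _ = f := (as_sum f).symm

end

section

variable {σ k : Type*} [CommRing k] {p e : ℕ} [ExpChar k p] [PerfectRing k p]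

theorem frobeniusComponent_mem_of_mem_frobPow {B : Ideal (MvPolynomial σ k)} {c : σ →₀ ℕ}
    (hc : ∀ i, c i < p ^ e) {f : MvPolynomial σ k} (hf : f ∈ frobPow (p ^ e) B) :
    frobeniusComponent p e c f ∈ B := by
  obtain ⟨a, ha, rfl⟩ := Submodule.mem_span_set.mp hf
  rw [Finsupp.sum, frobeniusComponent_sum]
  refine B.sum_mem fun g hg => ?_
  obtain ⟨b, hb, rfl⟩ := ha hg
  rw [smul_eq_mul, mul_comm, frobeniusComponent_pow_mul hc]
  exact B.mul_mem_right _ hb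

theorem mem_frobPow_of_forall_frobeniusComponent_mem {A : Ideal (MvPolynomial σ k)}
    {f : MvPolynomial σ k} (h : ∀ c : σ →₀ ℕ, (∀ i, c i < p ^ e) → frobeniusComponent p e c f ∈ A) :
    f ∈ frobPow (p ^ e) A := by
  classical
  have hC : ∀ c ∈ f.support.image (modNat (p ^ e)), ∀ i, c i < p ^ e := by
    simp only [Finset.mem_image]
    rintro c ⟨ν, -, rfl⟩
    exact modNat_lt (pow_ne_zero e (expChar_ne_zero k p)) ν
  rw [← sum_monomial_mul_frobeniusComponent_pow hC f fun ν => Finset.mem_image_of_mem _]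
  exact Ideal.sum_mem _ fun c hc =>
    Ideal.mul_mem_left _ _ (Ideal.subset_span ⟨_, h c (hC c hc), rfl⟩)

theorem le_frobPow_frobRoot (J : Ideal (MvPolynomial σ k)) :
    J ≤ frobPow (p ^ e) (frobRoot (p ^ e) J) := fun _ hf =>
  mem_frobPow_of_forall_frobeniusComponent_mem fun _ hc =>
    Submodule.mem_sInf.mpr fun _ hB => frobeniusComponent_mem_of_mem_frobPow hc (hB hf)

end

end MvPolynomial

theorem stmt_8_general {k : Type*} [Field k] (p : ℕ) (hp : p.Prime) [CharP k p]
    [PerfectField k]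
    (n e : ℕ)
    (J : Ideal (MvPolynomial (Fin n) k)) :
    ∃ A : Ideal (MvPolynomial (Fin n) k),
      J ≤ frobPow (p ^ e) A ∧
      ∀ B : Ideal (MvPolynomial (Fin n) k), J ≤ frobPow (p ^ e) B → A ≤ B := by
  have : ExpChar k p := ExpChar.prime hp
  exact ⟨frobRoot (p ^ e) J, le_frobPow_frobRoot J, fun _ => frobRoot_le⟩

/-- There is a smallest ideal `A` with `J ⊆ A^{[q]}`, `q = p^e`. -/
theorem stmt_8 {k : Type*} [Field k] (p : ℕ) (hp : p.Prime) [CharP k p]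
    [PerfectField k]
    (n e : ℕ) (he : 1 ≤ e)
    (J : Ideal (MvPolynomial (Fin n) k)) :
    ∃ A : Ideal (MvPolynomial (Fin n) k),
      J ≤ frobPow (p ^ e) A ∧
      ∀ B : Ideal (MvPolynomial (Fin n) k), J ≤ frobPow (p ^ e) B → A ≤ B :=
  stmt_8_general p hp n e J
end

section
/- Let k be a perfect field of characteristic p > 0, S = k[x_1,…,x_n], e ≥ 1, q = p^e, I ⊆ S an ideal with I ≠ S, and z ∈ (I^{[q]} : I). Let φ : F^e_* S → S be the S-linear map φ(F^e_* s) = Φ_S(F^e_*(z·s)), which satisfies φ(F^e_* I) ⊆ I. Then the induced map φ/I : F^e_*(S/I) → S/I is surjective if and only if z ∉ m^{[q]} for every maximal ideal m of S containing I. -/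
open MvPolynomial

section FrobeniusSemilinear

variable {S : Type*} [CommRing S] {q : ℕ} (Φ : S →+ S)

theorem map_mul_mem_of_mem_frobPow (hΦ : ∀ s f, Φ (s ^ q * f) = s * Φ f) {a : Ideal S} {w : S}
    (hw : w ∈ frobPow q a) (s : S) : Φ (w * s) ∈ a := by
  induction hw using Submodule.span_induction generalizing s with
  | mem x hx =>
    obtain ⟨f, hf, rfl⟩ := hx
    rw [hΦ]
    exact a.mul_mem_right _ hf
  | zero => simp
  | add x y _ _ hx hy => simpa only [add_mul, map_add] using a.add_mem (hx s) (hy s)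
  | smul t x _ hx => simpa only [smul_eq_mul, mul_comm t x, mul_assoc] using hx (t * s)

theorem map_mul_mem_of_mem_colon (hΦ : ∀ s f, Φ (s ^ q * f) = s * Φ f) {I : Ideal S} {z : S}
    (hz : z ∈ (frobPow q I).colon I) {x : S} (hx : x ∈ I) : Φ (z * x) ∈ I := by
  simpa using map_mul_mem_of_mem_frobPow Φ hΦ (Submodule.mem_colon.mp hz x hx) 1

/-- The ideal `φ(F^e_* S)` for `φ = Φ (z * ·)`. -/
def imageIdeal (hΦ : ∀ s f, Φ (s ^ q * f) = s * Φ f) (z : S) : Ideal S where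
  carrier := Set.range fun s => Φ (z * s)
  add_mem' := by
    rintro _ _ ⟨s, rfl⟩ ⟨t, rfl⟩
    exact ⟨s + t, by simp only [mul_add, map_add]⟩
  zero_mem' := ⟨0, by simp⟩
  smul_mem' := by
    rintro t _ ⟨s, rfl⟩
    exact ⟨t ^ q * s, by simp only [mul_left_comm z, hΦ, smul_eq_mul]⟩

theorem surjective_mk_map_mul_iff (hΦ : ∀ s f, Φ (s ^ q * f) = s * Φ f) {I : Ideal S} {z : S} :
    Function.Surjective (fun s => Ideal.Quotient.mk I (Φ (z * s))) ↔
      imageIdeal Φ hΦ z ⊔ I = ⊤ := by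
  constructor
  · intro hsurj
    obtain ⟨s, hs⟩ := hsurj 1
    rw [Ideal.eq_top_iff_one, ← sub_sub_cancel (Φ (z * s)) 1]
    exact Submodule.sub_mem_sup ⟨s, rfl⟩ (Ideal.Quotient.eq.mp hs)
  · intro hJI y
    obtain ⟨y, rfl⟩ := Ideal.Quotient.mk_surjective y
    obtain ⟨_, ⟨s, rfl⟩, b, hb, hab⟩ :=
      Submodule.mem_sup.mp ((Ideal.eq_top_iff_one _).mp hJI)
    -- `Φ (z * y^q * s) = y * Φ (z * s) ≡ y` modulo `I`
    refine ⟨y ^ q * s, Ideal.Quotient.eq.mpr ?_⟩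
    rw [mul_left_comm, hΦ, show Φ (z * s) = 1 - b by rw [← hab, add_sub_cancel_right]]
    simpa [mul_sub] using I.neg_mem (I.mul_mem_left y hb)

end FrobeniusSemilinear

theorem prod_pow_eq_pow_mul_prod_pow_mod {ι M : Type*} [CommMonoid M] (s : Finset ι) (x : ι → M)
    (d : ι → ℕ) (q : ℕ) :
    ∏ i ∈ s, x i ^ d i = (∏ i ∈ s, x i ^ (d i / q)) ^ q * ∏ i ∈ s, x i ^ (d i % q) := by
  rw [← Finset.prod_pow, ← Finset.prod_mul_distrib]
  refine Finset.prod_congr rfl fun i _ => ?_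
  rw [← pow_mul, ← pow_add, Nat.div_add_mod']

theorem Nat.add_pred_sub_mod_ne_pred {a b q : ℕ} (ha : a < q) (hb : b < q) (hab : a ≠ b) :
    (a + (q - 1 - b)) % q ≠ q - 1 := by
  rcases lt_or_gt_of_ne hab with h | h
  · rw [Nat.mod_eq_of_lt (by omega)]
    omega
  · rw [show a + (q - 1 - b) = a - b - 1 + q by omega, Nat.add_mod_right,
      Nat.mod_eq_of_lt (by omega)]
    omega

section FrobeniusTrace

variable {σ R : Type*} [Fintype σ] [CommRing R]

/-- `Φ` is the map `Φ_S : F^e_* S → S` for `S = R[x_σ]` and `q = p^e`, written additively. -/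
structure IsFrobeniusTrace (q : ℕ) (Φ : MvPolynomial σ R →+ MvPolynomial σ R) : Prop where
  map_pow_mul : ∀ s f, Φ (s ^ q * f) = s * Φ f
  map_prod_X_pow_fin : ∀ α : σ → Fin q,
    Φ (∏ i, X i ^ (α i : ℕ)) = if ∀ i, (α i : ℕ) = q - 1 then 1 else 0

variable {q : ℕ} {Φ : MvPolynomial σ R →+ MvPolynomial σ R}

theorem IsFrobeniusTrace.map_prod_X_pow (hΦ : IsFrobeniusTrace q Φ) (hq : 0 < q) (d : σ → ℕ) :
    Φ (∏ i, X i ^ d i) = if ∀ i, d i % q = q - 1 then ∏ i, X i ^ (d i / q) else 0 := by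
  rw [prod_pow_eq_pow_mul_prod_pow_mod _ _ d q, hΦ.map_pow_mul,
    hΦ.map_prod_X_pow_fin fun i => ⟨d i % q, Nat.mod_lt _ hq⟩]
  simp only [mul_ite, mul_one, mul_zero]

/-- `Φ (· * x^{q-1-β})` reads off the coefficient at `β` in the basis of `F^e_* S` over `S`. -/
theorem IsFrobeniusTrace.map_mul_prod_X_pow_pred_sub [DecidableEq σ] (hΦ : IsFrobeniusTrace q Φ)
    (hq : 0 < q) {w : MvPolynomial σ R} {c : (σ → Fin q) → MvPolynomial σ R}
    (hw : w = ∑ α, c α ^ q * ∏ i, X i ^ (α i : ℕ)) (β : σ → Fin q) :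
    Φ (w * ∏ i, X i ^ (q - 1 - β i)) = c β := by
  have hterm : ∀ α, Φ ((c α ^ q * ∏ i, X i ^ (α i : ℕ)) * ∏ i, X i ^ (q - 1 - β i)) =
      c α * Φ (∏ i, X i ^ ((α i : ℕ) + (q - 1 - β i))) := by
    intro α
    rw [mul_assoc, hΦ.map_pow_mul, ← Finset.prod_mul_distrib]
    simp only [← pow_add]
  rw [hw, Finset.sum_mul, map_sum, Finset.sum_eq_single β (fun α _ hαβ => ?_) (by simp), hterm]
  · have hβ : ∀ i, (β i : ℕ) + (q - 1 - β i) = q - 1 := fun i => by have := (β i).isLt; omega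
    have hone : Φ (∏ i, X i ^ (q - 1)) = 1 := by
      simpa using hΦ.map_prod_X_pow_fin fun _ => ⟨q - 1, by omega⟩
    simp only [hβ, hone, mul_one]
  · obtain ⟨i, hi⟩ := Function.ne_iff.mp hαβ
    rw [hterm, hΦ.map_prod_X_pow hq, if_neg, mul_zero]
    exact fun h => Nat.add_pred_sub_mod_ne_pred (α i).isLt (β i).isLt (Fin.val_ne_of_ne hi) (h i)

end FrobeniusTrace

theorem MvPolynomial.exists_eq_sum_pow_mul_prod_X_pow {σ k : Type*} [Fintype σ] [DecidableEq σ]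
    [Field k] (p : ℕ) [Fact p.Prime] [CharP k p] [PerfectField k] (e : ℕ)
    (w : MvPolynomial σ k) :
    ∃ c : (σ → Fin (p ^ e)) → MvPolynomial σ k, w = ∑ α, c α ^ p ^ e * ∏ i, X i ^ (α i : ℕ) := by
  have hq : p ^ e ≠ 0 := pow_ne_zero e (Fact.out : p.Prime).ne_zero
  induction w using MvPolynomial.induction_on' with
  | monomial d a =>
    obtain ⟨b, rfl⟩ := (iterateFrobeniusEquiv k p e).surjective a
    let β : σ → Fin (p ^ e) := fun i => ⟨d i % p ^ e, Nat.mod_lt _ (Nat.pos_of_ne_zero hq)⟩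
    refine ⟨Pi.single β (C b * ∏ i, X i ^ (d i / p ^ e)), ?_⟩
    rw [Finset.sum_eq_single β (fun α _ hα => by simp [hα, zero_pow hq]) (by simp),
      monomial_eq, Finsupp.prod_pow, prod_pow_eq_pow_mul_prod_pow_mod _ _ d (p ^ e),
      iterateFrobeniusEquiv_def, C_pow]
    simp [β, mul_pow, mul_assoc]
  | add f g hf hg =>
    obtain ⟨c, rfl⟩ := hf
    obtain ⟨c', rfl⟩ := hg
    exact ⟨c + c', by simp only [Pi.add_apply, add_pow_char_pow, add_mul, Finset.sum_add_distrib]⟩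

theorem IsFrobeniusTrace.imageIdeal_le_iff {σ k : Type*} [Fintype σ] [DecidableEq σ]
    [Field k] {p : ℕ} [Fact p.Prime] [CharP k p] [PerfectField k] {e : ℕ}
    {Φ : MvPolynomial σ k →+ MvPolynomial σ k} (hΦ : IsFrobeniusTrace (p ^ e) Φ)
    {z : MvPolynomial σ k} {a : Ideal (MvPolynomial σ k)} :
    imageIdeal Φ hΦ.map_pow_mul z ≤ a ↔ z ∈ frobPow (p ^ e) a := by
  constructor
  · intro h
    obtain ⟨c, hc⟩ := exists_eq_sum_pow_mul_prod_X_pow p e z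
    rw [hc]
    refine Ideal.sum_mem _ fun α _ => Ideal.mul_mem_right _ _ (Ideal.subset_span ⟨c α, ?_, rfl⟩)
    rw [← hΦ.map_mul_prod_X_pow_pred_sub (pow_pos (Fact.out : p.Prime).pos e) hc α]
    exact h ⟨_, rfl⟩
  · rintro hz _ ⟨s, rfl⟩
    exact map_mul_mem_of_mem_frobPow Φ hΦ.map_pow_mul hz s

theorem stmt_14_general {k : Type*} [Field k] (p : ℕ) (hp : p.Prime) [CharP k p]
    [PerfectField k]
    (n e : ℕ)
    (Φ : MvPolynomial (Fin n) k → MvPolynomial (Fin n) k)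
    (hΦadd : ∀ f g, Φ (f + g) = Φ f + Φ g)
    (hΦlin : ∀ s f, Φ (s ^ p ^ e * f) = s * Φ f)
    (hΦbasis : ∀ α : Fin n → Fin (p ^ e),
      Φ (∏ i : Fin n, X i ^ (α i : ℕ)) =
        if ∀ i, (α i : ℕ) = p ^ e - 1 then 1 else 0)
    (I : Ideal (MvPolynomial (Fin n) k))
    (z : MvPolynomial (Fin n) k)
    (hz : z ∈ Submodule.colon (frobPow (p ^ e) I) I) :
    (∀ x ∈ I, Φ (z * x) ∈ I) ∧
    (Function.Surjective
        (fun s : MvPolynomial (Fin n) k => Ideal.Quotient.mk I (Φ (z * s))) ↔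
      ∀ m : Ideal (MvPolynomial (Fin n) k),
        m.IsMaximal → I ≤ m → z ∉ frobPow (p ^ e) m) := by
  have : Fact p.Prime := ⟨hp⟩
  let Ψ : MvPolynomial (Fin n) k →+ MvPolynomial (Fin n) k := AddMonoidHom.mk' Φ hΦadd
  have hΨ : IsFrobeniusTrace (p ^ e) Ψ := ⟨hΦlin, fun α => (hΦbasis α).trans (by congr)⟩
  refine ⟨fun x => map_mul_mem_of_mem_colon Ψ hΦlin hz,
    (surjective_mk_map_mul_iff Ψ hΦlin).trans ?_⟩
  rw [← not_ne_iff, Ideal.ne_top_iff_exists_maximal]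
  simp only [not_exists, not_and, sup_le_iff, hΨ.imageIdeal_le_iff]
  exact forall₂_congr fun _ _ => forall_comm

/-- Fedder's Lemma, part (b): for `z ∈ (I^{[q]} : I)`, the map
`φ = Φ_S(z ⬝ –)` is compatible with `I`, and the induced map `φ/I` on `S/I`
is surjective iff `z ∉ m^{[q]}` for every maximal ideal `m ⊇ I`. -/
theorem stmt_14 {k : Type*} [Field k] (p : ℕ) (hp : p.Prime) [CharP k p]
    [PerfectField k]
    (n e : ℕ) (he : 1 ≤ e)
    (Φ : MvPolynomial (Fin n) k → MvPolynomial (Fin n) k)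
    (hΦadd : ∀ f g, Φ (f + g) = Φ f + Φ g)
    (hΦlin : ∀ s f, Φ (s ^ p ^ e * f) = s * Φ f)
    (hΦbasis : ∀ α : Fin n → Fin (p ^ e),
      Φ (∏ i : Fin n, X i ^ (α i : ℕ)) =
        if ∀ i, (α i : ℕ) = p ^ e - 1 then 1 else 0)
    (I : Ideal (MvPolynomial (Fin n) k)) (hI : I ≠ ⊤)
    (z : MvPolynomial (Fin n) k)
    (hz : z ∈ Submodule.colon (frobPow (p ^ e) I) I) :
    (∀ x ∈ I, Φ (z * x) ∈ I) ∧
    (Function.Surjective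
        (fun s : MvPolynomial (Fin n) k => Ideal.Quotient.mk I (Φ (z * s))) ↔
      ∀ m : Ideal (MvPolynomial (Fin n) k),
        m.IsMaximal → I ≤ m → z ∉ frobPow (p ^ e) m) :=
  stmt_14_general p hp n e Φ hΦadd hΦlin hΦbasis I z hz
end
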